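/- (Claim 4) For any integer p ≥ 1 and any indices 1 ≤ h ≤ i ≤ j ≤ l ≤ n with p ≤ j − i + 1, OPT(p, i, j) ≤ OPT(p, h, l); that is, the optimal minimax p-sink cost is monotone with respect to containment of the underlying vertex interval. -/
import Mathlib


open Finset

/-- Left evacuation time `L_i(x)`. -/
noncomputable def evacL (v w : ℕ → ℝ) (c τ : ℝ) (n i : ℕ) (x : ℝ) : ℝ :=
  ((Finset.Icc i n).filter (fun l => v l < x)).fold max 0
    (fun l => τ * (x - v l) + (∑ h ∈ Finset.Icc i l, w h) / c)

/-- Right evacuation time `R_j(x)`. -/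
noncomputable def evacR (v w : ℕ → ℝ) (c τ : ℝ) (n j : ℕ) (x : ℝ) : ℝ :=
  ((Finset.Icc 1 j).filter (fun l => x < v l)).fold max 0
    (fun l => τ * (v l - x) + (∑ h ∈ Finset.Icc l j, w h) / c)

/-- 1-sink evacuation cost `Θ_{i,j}(x)`. -/
noncomputable def theta (v w : ℕ → ℝ) (c τ : ℝ) (n i j : ℕ) (x : ℝ) : ℝ :=
  max (evacL v w c τ n i x) (evacR v w c τ n j x)

/-- `OPT(1,i,j)`. -/
noncomputable def OPT1 (v w : ℕ → ℝ) (c τ : ℝ) (n i j : ℕ) : ℝ :=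
  sInf (theta v w c τ n i j '' Set.Icc (v i) (v j))

/-- `OPT(p,i,j)` for general `p`. -/
noncomputable def OPTk (v w : ℕ → ℝ) (c τ : ℝ) (n p i j : ℕ) : ℝ :=
  if p = 1 then OPT1 v w c τ n i j
  else sInf { m : ℝ | ∃ t : ℕ → ℕ, t 0 = i - 1 ∧ t p = j ∧ StrictMonoOn t (Set.Icc 0 p) ∧
        m = (Finset.Icc 1 p).fold max 0 (fun q => OPT1 v w c τ n (t (q - 1) + 1) (t q)) }


section aux

variable {v w : ℕ → ℝ} {c τ : ℝ} {n : ℕ}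

lemma evacL_nonneg (i : ℕ) (x : ℝ) : 0 ≤ evacL v w c τ n i x :=
  (Finset.le_fold_max 0).mpr (Or.inl le_rfl)

lemma evacR_nonneg (j : ℕ) (x : ℝ) : 0 ≤ evacR v w c τ n j x :=
  (Finset.le_fold_max 0).mpr (Or.inl le_rfl)

lemma theta_nonneg (i j : ℕ) (x : ℝ) : 0 ≤ theta v w c τ n i j x :=
  le_max_of_le_left (evacL_nonneg i x)

lemma OPT1_nonneg (i j : ℕ) : 0 ≤ OPT1 v w c τ n i j :=
  Real.sInf_nonneg (by rintro _ ⟨x, -, rfl⟩; exact theta_nonneg i j x)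

lemma theta_bddBelow (i j : ℕ) :
    BddBelow (theta v w c τ n i j '' Set.Icc (v i) (v j)) :=
  ⟨0, by rintro _ ⟨x, -, rfl⟩; exact theta_nonneg i j x⟩

lemma evacL_le (hc : 0 < c) (hτ : 0 ≤ τ) (hw0 : ∀ m, 1 ≤ m → m ≤ n → 0 ≤ w m)
    {h i : ℕ} (hh : 1 ≤ h) (hhi : h ≤ i) {x y : ℝ} (hyx : y ≤ x) :
    evacL v w c τ n i y ≤ evacL v w c τ n h x := by
  rw [evacL, Finset.fold_max_le]
  refine ⟨evacL_nonneg h x, fun l hl => ?_⟩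
  simp only [Finset.mem_filter, Finset.mem_Icc] at hl
  obtain ⟨⟨hil, hln'⟩, hvl⟩ := hl
  have hmem : l ∈ (Finset.Icc h n).filter (fun l => v l < x) := by
    simp only [Finset.mem_filter, Finset.mem_Icc]
    exact ⟨⟨hhi.trans hil, hln'⟩, lt_of_lt_of_le hvl hyx⟩
  have hsum : (∑ m ∈ Finset.Icc i l, w m) ≤ ∑ m ∈ Finset.Icc h l, w m := by
    refine Finset.sum_le_sum_of_subset_of_nonneg
      (Finset.Icc_subset_Icc_left hhi) (fun m hm _ => ?_)
    simp only [Finset.mem_Icc] at hm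
    exact hw0 m (hh.trans hm.1) (hm.2.trans hln')
  have hterm : τ * (y - v l) + (∑ m ∈ Finset.Icc i l, w m) / c ≤
      τ * (x - v l) + (∑ m ∈ Finset.Icc h l, w m) / c :=
    add_le_add (by gcongr) (by gcongr)
  exact hterm.trans ((Finset.le_fold_max _).mpr (Or.inr ⟨l, hmem, le_rfl⟩))

lemma evacR_le (hc : 0 < c) (hτ : 0 ≤ τ) (hw0 : ∀ m, 1 ≤ m → m ≤ n → 0 ≤ w m)
    {j l : ℕ} (hjl : j ≤ l) (hln : l ≤ n) {x y : ℝ} (hxy : x ≤ y) :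
    evacR v w c τ n j y ≤ evacR v w c τ n l x := by
  rw [evacR, Finset.fold_max_le]
  refine ⟨evacR_nonneg l x, fun m hm => ?_⟩
  simp only [Finset.mem_filter, Finset.mem_Icc] at hm
  obtain ⟨⟨hm1, hmj⟩, hvm⟩ := hm
  have hmem : m ∈ (Finset.Icc 1 l).filter (fun m => x < v m) := by
    simp only [Finset.mem_filter, Finset.mem_Icc]
    exact ⟨⟨hm1, hmj.trans hjl⟩, lt_of_le_of_lt hxy hvm⟩
  have hsum : (∑ a ∈ Finset.Icc m j, w a) ≤ ∑ a ∈ Finset.Icc m l, w a := by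
    refine Finset.sum_le_sum_of_subset_of_nonneg
      (Finset.Icc_subset_Icc_right hjl) (fun a ha _ => ?_)
    simp only [Finset.mem_Icc] at ha
    exact hw0 a (hm1.trans ha.1) (ha.2.trans hln)
  have hterm : τ * (v m - y) + (∑ a ∈ Finset.Icc m j, w a) / c ≤
      τ * (v m - x) + (∑ a ∈ Finset.Icc m l, w a) / c :=
    add_le_add (by gcongr) (by gcongr)
  exact hterm.trans ((Finset.le_fold_max _).mpr (Or.inr ⟨m, hmem, le_rfl⟩))

lemma evacL_self (hv : StrictMonoOn v (Set.Icc 1 n)) {i : ℕ} (hi1 : 1 ≤ i)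
    (hin : i ≤ n) : evacL v w c τ n i (v i) = 0 := by
  rw [evacL]
  have : (Finset.Icc i n).filter (fun l => v l < v i) = ∅ := by
    rw [Finset.filter_eq_empty_iff]
    intro l hl
    simp only [Finset.mem_Icc] at hl
    exact not_lt.mpr (hv.monotoneOn (Set.mem_Icc.mpr ⟨hi1, hin⟩)
      (Set.mem_Icc.mpr ⟨hi1.trans hl.1, hl.2⟩) hl.1)
  rw [this, Finset.fold_empty]

lemma evacR_self (hv : StrictMonoOn v (Set.Icc 1 n)) {j : ℕ} (hj1 : 1 ≤ j)
    (hjn : j ≤ n) : evacR v w c τ n j (v j) = 0 := by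
  rw [evacR]
  have : (Finset.Icc 1 j).filter (fun l => v j < v l) = ∅ := by
    rw [Finset.filter_eq_empty_iff]
    intro l hl
    simp only [Finset.mem_Icc] at hl
    exact not_lt.mpr (hv.monotoneOn (Set.mem_Icc.mpr ⟨hl.1, hl.2.trans hjn⟩)
      (Set.mem_Icc.mpr ⟨hj1, hjn⟩) hl.2)
  rw [this, Finset.fold_empty]

lemma OPT1_self (hv : StrictMonoOn v (Set.Icc 1 n)) {a : ℕ} (ha1 : 1 ≤ a)
    (han : a ≤ n) : OPT1 v w c τ n a a = 0 := by
  rw [OPT1, Set.Icc_self, Set.image_singleton, csInf_singleton, theta,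
    evacL_self hv ha1 han, evacR_self hv ha1 han, max_self]

lemma OPT1_mono (hv : StrictMonoOn v (Set.Icc 1 n))
    (hw0 : ∀ m, 1 ≤ m → m ≤ n → 0 ≤ w m) (hc : 0 < c) (hτ : 0 ≤ τ)
    {h i j l : ℕ} (hh : 1 ≤ h) (hhi : h ≤ i) (hij : i ≤ j) (hjl : j ≤ l)
    (hln : l ≤ n) : OPT1 v w c τ n i j ≤ OPT1 v w c τ n h l := by
  have hvij : v i ≤ v j :=
    hv.monotoneOn (Set.mem_Icc.mpr ⟨hh.trans hhi, (hij.trans hjl).trans hln⟩)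
      (Set.mem_Icc.mpr ⟨hh.trans (hhi.trans hij), hjl.trans hln⟩) hij
  have hvhl : v h ≤ v l :=
    hv.monotoneOn (Set.mem_Icc.mpr ⟨hh, (hhi.trans (hij.trans hjl)).trans hln⟩)
      (Set.mem_Icc.mpr ⟨hh.trans (hhi.trans (hij.trans hjl)), hln⟩)
      (hhi.trans (hij.trans hjl))
  refine le_csInf ⟨_, ⟨v h, Set.mem_Icc.mpr ⟨le_rfl, hvhl⟩, rfl⟩⟩ ?_
  rintro m ⟨x, hx, rfl⟩
  obtain ⟨hx1, hx2⟩ := Set.mem_Icc.mp hx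
  set y := max (v i) (min x (v j)) with hy
  have hymem : y ∈ Set.Icc (v i) (v j) :=
    Set.mem_Icc.mpr ⟨le_max_left _ _, max_le hvij (min_le_right _ _)⟩
  have h1 : OPT1 v w c τ n i j ≤ theta v w c τ n i j y :=
    csInf_le (theta_bddBelow i j) ⟨y, hymem, rfl⟩
  refine h1.trans (max_le ?_ ?_)
  · rcases le_or_gt y x with hyx | hxy
    · exact le_max_of_le_left (evacL_le hc hτ hw0 hh hhi hyx)
    · have hyvi : y = v i := by
        rcases max_choice (v i) (min x (v j)) with he | he
        · rw [hy]; exact he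
        · exfalso
          have hle : y ≤ x := by
            rw [hy, he]; exact min_le_left _ _
          exact absurd hle (not_le.mpr hxy)
      rw [hyvi, evacL_self hv (hh.trans hhi) ((hij.trans hjl).trans hln)]
      exact theta_nonneg h l x
  · rcases le_or_gt x y with hxy | hyx
    · exact le_max_of_le_right (evacR_le hc hτ hw0 hjl hln hxy)
    · have hyvj : y = v j := by
        have hmin : min x (v j) = v j := by
          rcases min_choice x (v j) with hm | hm
          · exfalso
            have hxy' : x ≤ y := by
              rw [hy, hm]
              exact le_max_right _ _
            exact absurd hxy' (not_le.mpr hyx)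
          · exact hm
        rw [hy, hmin, max_eq_right hvij]
      rw [hyvj, evacR_self hv (hh.trans (hhi.trans hij)) (hjl.trans hln)]
      exact theta_nonneg h l x

end aux


/-- Claim 4: the optimal minimax p-sink cost is monotone with respect
to containment of the underlying vertex interval. -/
theorem stmt6 (n : ℕ) (v w : ℕ → ℝ) (c τ : ℝ) (p h i j l : ℕ)
    (hp : 1 ≤ p) (hh : 1 ≤ h) (hhi : h ≤ i) (hij : i ≤ j) (hjl : j ≤ l) (hln : l ≤ n)
    (hpij : p ≤ j - i + 1)
    (hv1 : v 1 = 0) (hv : StrictMonoOn v (Set.Icc 1 n))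
    (hw : ∀ h, 1 ≤ h → h ≤ n → 0 < w h) (hc : 0 < c) (hτ : 0 < τ) :
    OPTk v w c τ n p i j ≤ OPTk v w c τ n p h l := by
  have hw0 : ∀ m, 1 ≤ m → m ≤ n → 0 ≤ w m := fun m a b => (hw m a b).le
  by_cases hp1 : p = 1
  · rw [OPTk, OPTk, if_pos hp1, if_pos hp1]
    exact OPT1_mono hv hw0 hc hτ.le hh hhi hij hjl hln
  · rw [OPTk, OPTk, if_neg hp1, if_neg hp1]
    have hp2 : 2 ≤ p := by omega
    refine le_csInf ?_ ?_
    · -- the (h,l) divider set is nonempty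
      refine ⟨_, fun q => if q = p then l else h - 1 + q, ?_, ?_, ?_, rfl⟩
      · show (if (0:ℕ) = p then l else h - 1 + 0) = h - 1
        rw [if_neg (show (0:ℕ) ≠ p by omega)]
        omega
      · show (if p = p then l else h - 1 + p) = l
        rw [if_pos rfl]
      · intro a ha b hb hab
        obtain ⟨-, ha2⟩ := Set.mem_Icc.mp ha
        obtain ⟨-, hb2⟩ := Set.mem_Icc.mp hb
        dsimp only
        split_ifs <;> omega
    · rintro m ⟨t, ht0, htp, htm, rfl⟩
      set s : ℕ → ℕ := fun q => min (max (t q) (i - 1 + q)) (j - p + q) with hs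
      have hsm : StrictMonoOn s (Set.Icc 0 p) := by
        intro a ha b hb hab
        have htab := htm ha hb hab
        simp only [hs]
        omega
      have key : ∀ q, 1 ≤ q → q ≤ p →
          OPT1 v w c τ n (s (q - 1) + 1) (s q) ≤
            OPT1 v w c τ n (t (q - 1) + 1) (t q) := by
        intro q hq1 hqp
        have h0mem : (0 : ℕ) ∈ Set.Icc 0 p := Set.mem_Icc.mpr ⟨le_rfl, Nat.zero_le p⟩
        have hpmem : p ∈ Set.Icc 0 p := Set.mem_Icc.mpr ⟨Nat.zero_le _, le_rfl⟩
        have hqmem : q ∈ Set.Icc 0 p := Set.mem_Icc.mpr ⟨Nat.zero_le _, hqp⟩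
        have hq1mem : q - 1 ∈ Set.Icc 0 p := Set.mem_Icc.mpr ⟨Nat.zero_le _, by omega⟩
        have htlt : t (q - 1) < t q := htm hq1mem hqmem (by omega)
        have ht1 : h - 1 ≤ t (q - 1) := by
          rcases eq_or_ne q 1 with rfl | hne
          · simp [ht0]
          · have := htm h0mem hq1mem (by omega)
            omega
        have ht2 : t q ≤ l := by
          rcases eq_or_ne q p with rfl | hne
          · exact htp.le
          · have := htm hqmem hpmem (by omega)
            omega
        have hslt : s (q - 1) < s q := hsm hq1mem hqmem (by omega)
        have hcase : s (q - 1) + 1 = s q ∨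
            (t (q - 1) ≤ s (q - 1) ∧ s q ≤ t q) := by
          simp only [hs]
          omega
        rcases hcase with hcase | ⟨h1, h2⟩
        · rw [hcase]
          have ha1 : 1 ≤ s q := by simp only [hs]; omega
          have ha2 : s q ≤ n := by simp only [hs]; omega
          rw [OPT1_self hv ha1 ha2]
          exact OPT1_nonneg _ _
        · exact OPT1_mono hv hw0 hc hτ.le (by omega) (by omega) hslt h2 (by omega)
      have hmem : (Finset.Icc 1 p).fold max 0
          (fun q => OPT1 v w c τ n (s (q - 1) + 1) (s q)) ∈
          { m : ℝ | ∃ t : ℕ → ℕ, t 0 = i - 1 ∧ t p = j ∧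
            StrictMonoOn t (Set.Icc 0 p) ∧
            m = (Finset.Icc 1 p).fold max 0
              (fun q => OPT1 v w c τ n (t (q - 1) + 1) (t q)) } := by
        refine ⟨s, ?_, ?_, hsm, rfl⟩
        · simp only [hs]; omega
        · simp only [hs]; omega
      have hbdd : BddBelow { m : ℝ | ∃ t : ℕ → ℕ, t 0 = i - 1 ∧ t p = j ∧
            StrictMonoOn t (Set.Icc 0 p) ∧
            m = (Finset.Icc 1 p).fold max 0
              (fun q => OPT1 v w c τ n (t (q - 1) + 1) (t q)) } := by
        refine ⟨0, ?_⟩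
        rintro x ⟨t', -, -, -, rfl⟩
        exact (Finset.le_fold_max 0).mpr (Or.inl le_rfl)
      refine (csInf_le hbdd hmem).trans ?_
      rw [Finset.fold_max_le]
      refine ⟨(Finset.le_fold_max 0).mpr (Or.inl le_rfl), fun q hq => ?_⟩
      obtain ⟨hq1, hqp⟩ := Finset.mem_Icc.mp hq
      exact (key q hq1 hqp).trans ((Finset.le_fold_max _).mpr
        (Or.inr ⟨q, Finset.mem_Icc.mpr ⟨hq1, hqp⟩, le_rfl⟩))
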